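/- arXiv:1206.2612 — 3 statements merged into one kernel-verified Lean document; each statement's English description precedes it below -/
import Mathlib

section
/- Let 𝒮 be a maximal nested collection with support S. Then the map φ : S → 𝒮 sending each s ∈ S to the smallest member of 𝒮 containing s is well-defined (such a smallest member exists for each s ∈ S) and is a bijection between S and 𝒮. -/
open MvPolynomial

/-- Reachability inside a subset `U` of vertices, along edges of `E`. -/
def ReachIn {n : ℕ} (E : Fin n → Fin n → Prop) (U : Finset (Fin n)) (a b : Fin n) : Prop :=
  Relation.ReflTransGen (fun x y => E x y ∧ x ∈ U ∧ y ∈ U) a b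

/-- A nonempty subset `I` is strongly connected if any vertex of `I` can reach any
other vertex of `I` by a directed path staying inside `I`. -/
def StronglyConnected {n : ℕ} (E : Fin n → Fin n → Prop) (I : Finset (Fin n)) : Prop :=
  I.Nonempty ∧ ∀ a ∈ I, ∀ b ∈ I, ReachIn E I a b

open Classical in
/-- The strongly connected component of `x` in the induced subgraph on `U`. -/
noncomputable def scc {n : ℕ} (E : Fin n → Fin n → Prop) (U : Finset (Fin n)) (x : Fin n) :
    Finset (Fin n) :=
  U.filter fun y => ReachIn E U x y ∧ ReachIn E U y x

/-- `S ⊕ j` : the strongly connected component of `S ∪ {j}` containing `j`. -/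
noncomputable def oplus {n : ℕ} (E : Fin n → Fin n → Prop) (S : Finset (Fin n)) (j : Fin n) :
    Finset (Fin n) :=
  scc E (insert j S) j

/-- `S ⊖ j = (S ∪ {j}) − (S ⊕ j)`. -/
noncomputable def ominus {n : ℕ} (E : Fin n → Fin n → Prop) (S : Finset (Fin n)) (j : Fin n) :
    Finset (Fin n) :=
  insert j S \ oplus E S j

/-- A family of strongly connected subsets is nested if any two members are nested or
disjoint, and any tuple of pairwise disjoint members are exactly the strongly connected
components of their union. -/
def Nested {n : ℕ} (E : Fin n → Fin n → Prop) (𝒮 : Finset (Finset (Fin n))) : Prop :=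
  (∀ I ∈ 𝒮, StronglyConnected E I) ∧
  (∀ I ∈ 𝒮, ∀ J ∈ 𝒮, I ⊆ J ∨ J ⊆ I ∨ Disjoint I J) ∧
  (∀ 𝒯 ⊆ 𝒮, (∀ I ∈ 𝒯, ∀ J ∈ 𝒯, I ≠ J → Disjoint I J) →
    ∀ I ∈ 𝒯, ∀ x ∈ I, scc E (𝒯.sup id) x = I)

/-- The support of a collection: the union of its members. -/
def nsupport {n : ℕ} (𝒮 : Finset (Finset (Fin n))) : Finset (Fin n) := 𝒮.sup id

/-- A nested collection is maximal (for its support) if the only nested collection with the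
same support containing it is itself. -/
def MaximalNested {n : ℕ} (E : Fin n → Fin n → Prop) (𝒮 : Finset (Finset (Fin n))) : Prop :=
  Nested E 𝒮 ∧ ∀ 𝒮' : Finset (Finset (Fin n)),
    Nested E 𝒮' → nsupport 𝒮' = nsupport 𝒮 → 𝒮 ⊆ 𝒮' → 𝒮' = 𝒮

/-! The members of `𝒮` containing a vertex form a chain, so `φ` is well defined.

Surjectivity: if every vertex of `I ∈ 𝒮` lay in a proper submember of `I`, the maximal proper
submembers would be pairwise disjoint with union `I`, so by nestedness they would be the strongly
connected components of the strongly connected set `I`, which is absurd.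

Injectivity: if `s ≠ t` have the same smallest member `I`, let `D` be the union of the proper
submembers of `I` and `J = D ⊕ s`. Then `J` contains `s` but not `t`, so `J ∉ 𝒮`, yet
`insert J 𝒮` is still nested with the same support, contradicting maximality. -/

open Finset

section StronglyConnectedComponent

variable {n : ℕ} {E : Fin n → Fin n → Prop} {U V C : Finset (Fin n)} {x y : Fin n}

theorem ReachIn.mono (h : U ⊆ V) (hr : ReachIn E U x y) : ReachIn E V x y :=
  Relation.ReflTransGen.mono (fun _ _ hab => ⟨hab.1, h hab.2.1, h hab.2.2⟩) _ _ hr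

theorem mem_scc : y ∈ scc E U x ↔ y ∈ U ∧ ReachIn E U x y ∧ ReachIn E U y x := by
  classical
  simp [scc]

theorem scc_subset : scc E U x ⊆ U := fun _ hy => (mem_scc.1 hy).1

theorem self_mem_scc (hx : x ∈ U) : x ∈ scc E U x := mem_scc.2 ⟨hx, .refl, .refl⟩

theorem scc_eq_of_mem (hy : y ∈ scc E U x) : scc E U y = scc E U x := by
  obtain ⟨-, hxy, hyx⟩ := mem_scc.1 hy
  ext z
  simp only [mem_scc]
  exact ⟨fun ⟨hz, hyz, hzy⟩ => ⟨hz, hxy.trans hyz, hzy.trans hyx⟩,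
    fun ⟨hz, hxz, hzx⟩ => ⟨hz, hyx.trans hxz, hzx.trans hxy⟩⟩

theorem scc_mono (h : U ⊆ V) : scc E U x ⊆ scc E V x := fun _ hy =>
  let ⟨hyU, hxy, hyx⟩ := mem_scc.1 hy
  mem_scc.2 ⟨h hyU, hxy.mono h, hyx.mono h⟩

theorem reachIn_scc_of_mem (hy : y ∈ scc E U x) : ReachIn E (scc E U x) x y := by
  obtain ⟨-, hxy, hyx⟩ := mem_scc.1 hy
  clear hy
  induction hxy with
  | refl => exact .refl
  | tail hxb hbc ih =>
    have hbx : ReachIn E U _ x := .head hbc hyx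
    exact (ih hbx).tail ⟨hbc.1, mem_scc.2 ⟨hbc.2.1, hxb, hbx⟩,
      mem_scc.2 ⟨hbc.2.2, hxb.tail hbc, hyx⟩⟩

theorem stronglyConnected_scc (hx : x ∈ U) : StronglyConnected E (scc E U x) := by
  refine ⟨⟨x, self_mem_scc hx⟩, fun a ha b hb => ?_⟩
  have hxa : x ∈ scc E U a := by rw [scc_eq_of_mem ha]; exact self_mem_scc hx
  have hax := reachIn_scc_of_mem hxa
  rw [scc_eq_of_mem ha] at hax
  exact hax.trans (reachIn_scc_of_mem hb)

theorem StronglyConnected.subset_scc (hC : StronglyConnected E C) (hCU : C ⊆ U) (hx : x ∈ C) :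
    C ⊆ scc E U x := fun _ hy =>
  mem_scc.2 ⟨hCU hy, (hC.2 x hx _ hy).mono hCU, (hC.2 _ hy x hx).mono hCU⟩

theorem StronglyConnected.subset_scc_of_mem (hC : StronglyConnected E C) (hCU : C ⊆ U)
    (hy : y ∈ C) (hyx : y ∈ scc E U x) : C ⊆ scc E U x :=
  scc_eq_of_mem hyx ▸ hC.subset_scc hCU hy

theorem StronglyConnected.scc_eq (hC : StronglyConnected E C) (hx : x ∈ C) : scc E C x = C :=
  scc_subset.antisymm (hC.subset_scc subset_rfl hx)

end StronglyConnectedComponent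

section Laminar

variable {α : Type*}

def IsLaminar (𝒮 : Finset (Finset α)) : Prop :=
  ∀ I ∈ 𝒮, ∀ J ∈ 𝒮, I ⊆ J ∨ J ⊆ I ∨ Disjoint I J

theorem IsLaminar.pairwiseDisjoint_maximal {𝒮 𝒜 : Finset (Finset α)} (h : IsLaminar 𝒮)
    (h𝒜 : 𝒜 ⊆ 𝒮) : {M | Maximal (· ∈ 𝒜) M}.PairwiseDisjoint id := by
  intro M hM N hN hMN
  rcases h M (h𝒜 hM.1) N (h𝒜 hN.1) with hle | hle | hdisj
  · exact absurd (hle.antisymm (hM.2 hN.1 hle)) hMN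
  · exact absurd ((hN.2 hM.1 hle).antisymm hle) hMN
  · exact hdisj

variable [DecidableEq α]

theorem IsLaminar.insert {𝒮 : Finset (Finset α)} {J : Finset α} (h : IsLaminar 𝒮)
    (hJ : ∀ K ∈ 𝒮, J ⊆ K ∨ K ⊆ J ∨ Disjoint J K) : IsLaminar (insert J 𝒮) := by
  intro A hA B hB
  rcases mem_insert.1 hA with rfl | hA𝒮 <;> rcases mem_insert.1 hB with rfl | hB𝒮
  · exact Or.inl subset_rfl
  · exact hJ B hB𝒮
  · rcases hJ A hA𝒮 with h' | h' | h'
    exacts [Or.inr (Or.inl h'), Or.inl h', Or.inr (Or.inr h'.symm)]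
  · exact h A hA𝒮 B hB𝒮

theorem IsLaminar.exists_minimal_mem {𝒮 : Finset (Finset α)} (h : IsLaminar 𝒮) {s : α}
    (hs : s ∈ 𝒮.sup id) : ∃ I ∈ 𝒮, s ∈ I ∧ ∀ J ∈ 𝒮, s ∈ J → I ⊆ J := by
  classical
  obtain ⟨I₀, hI₀, hsI₀⟩ := mem_sup.1 hs
  obtain ⟨I, -, hI⟩ := (𝒮.filter (s ∈ ·)).exists_le_minimal (mem_filter.2 ⟨hI₀, hsI₀⟩)
  obtain ⟨hI𝒮, hsI⟩ := mem_filter.1 hI.1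
  refine ⟨I, hI𝒮, hsI, fun J hJ hsJ => ?_⟩
  rcases h I hI𝒮 J hJ with hIJ | hJI | hdisj
  · exact hIJ
  · exact hI.2 (mem_filter.2 ⟨hJ, hsJ⟩) hJI
  · exact absurd hsJ (disjoint_left.1 hdisj hsI)

theorem Finset.sup_filter_maximal (𝒜 : Finset (Finset α)) [DecidablePred (Maximal (· ∈ 𝒜))] :
    (𝒜.filter (Maximal (· ∈ 𝒜))).sup id = 𝒜.sup id := by
  refine (Finset.sup_mono (filter_subset _ _)).antisymm (Finset.sup_le fun A hA => ?_)
  obtain ⟨M, hAM, hM⟩ := 𝒜.exists_le_maximal hA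
  exact hAM.trans (le_sup (f := id) (mem_filter.2 ⟨hM.1, hM⟩))

end Laminar

namespace Nested

variable {n : ℕ} {E : Fin n → Fin n → Prop} {𝒮 𝒜 : Finset (Finset (Fin n))}
  {I M : Finset (Fin n)} {x : Fin n}

theorem isLaminar (h : Nested E 𝒮) : IsLaminar 𝒮 := h.2.1

theorem scc_sup_eq_of_maximal (h : Nested E 𝒮) (h𝒜 : 𝒜 ⊆ 𝒮) (hM : Maximal (· ∈ 𝒜) M)
    (hx : x ∈ M) : scc E (𝒜.sup id) x = M := by
  classical
  have hd := h.isLaminar.pairwiseDisjoint_maximal h𝒜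
  rw [← 𝒜.sup_filter_maximal]
  exact h.2.2 _ ((filter_subset _ _).trans h𝒜)
    (fun A hA B hB hAB => hd (mem_filter.1 hA).2 (mem_filter.1 hB).2 hAB)
    M (mem_filter.2 ⟨hM.1, hM⟩) x hx

theorem exists_mem_forall_subset (h : Nested E 𝒮) (hI : I ∈ 𝒮) :
    ∃ s ∈ I, ∀ J ∈ 𝒮, s ∈ J → I ⊆ J := by
  classical
  by_contra! hcover
  set 𝒜 := 𝒮.filter (· ⊂ I)
  have hsup : 𝒜.sup id = I := by
    refine le_antisymm (Finset.sup_le fun A hA => (mem_filter.1 hA).2.le) fun s hs => ?_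
    obtain ⟨J, hJ, hsJ, hIJ⟩ := hcover s hs
    rcases h.isLaminar I hI J hJ with hIJ' | hJI | hdisj
    · exact absurd hIJ' hIJ
    · exact mem_sup.2 ⟨J, mem_filter.2 ⟨hJ, ssubset_of_subset_not_subset hJI hIJ⟩, hsJ⟩
    · exact absurd hsJ (disjoint_left.1 hdisj hs)
  obtain ⟨x, hx⟩ := (h.1 I hI).1
  obtain ⟨A, hA, hxA⟩ := mem_sup.1 (hsup ▸ hx : x ∈ 𝒜.sup id)
  obtain ⟨M, hAM, hM⟩ := 𝒜.exists_le_maximal hA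
  have hsccM := h.scc_sup_eq_of_maximal (filter_subset _ _) hM (hAM hxA)
  rw [hsup, (h.1 I hI).scc_eq hx] at hsccM
  exact (mem_filter.1 hM.1).2.ne hsccM.symm

end Nested

section Refinement

variable {n : ℕ} {E : Fin n → Fin n → Prop} {𝒮 𝒯₀ : Finset (Finset (Fin n))}
  {I K A : Finset (Fin n)} {s t x y : Fin n}

def supportBelow (𝒮 : Finset (Finset (Fin n))) (I : Finset (Fin n)) : Finset (Fin n) :=
  nsupport (𝒮.filter (· ⊂ I))

theorem mem_supportBelow : y ∈ supportBelow 𝒮 I ↔ ∃ K ∈ 𝒮, K ⊂ I ∧ y ∈ K := by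
  simp [supportBelow, nsupport, and_assoc]

theorem subset_supportBelow (hK : K ∈ 𝒮) (hKI : K ⊂ I) : K ⊆ supportBelow 𝒮 I :=
  fun _ hy => mem_supportBelow.2 ⟨K, hK, hKI, hy⟩

theorem oplus_supportBelow_subset (hs : s ∈ I) : oplus E (supportBelow 𝒮 I) s ⊆ I :=
  scc_subset.trans <| insert_subset hs fun _ hy =>
    let ⟨_, _, hKI, hyK⟩ := mem_supportBelow.1 hy
    hKI.subset hyK

theorem Nested.subset_oplus_supportBelow (h : Nested E 𝒮) (hK : K ∈ 𝒮) (hKI : K ⊂ I)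
    (hyK : y ∈ K) (hy : y ∈ oplus E (supportBelow 𝒮 I) s) : K ⊆ oplus E (supportBelow 𝒮 I) s :=
  (h.1 K hK).subset_scc_of_mem ((subset_supportBelow hK hKI).trans (subset_insert _ _)) hyK hy

theorem Nested.oplus_supportBelow_comparable (h : Nested E 𝒮) (hI : I ∈ 𝒮) (hs : s ∈ I)
    (hK : K ∈ 𝒮) :
    oplus E (supportBelow 𝒮 I) s ⊆ K ∨ K ⊆ oplus E (supportBelow 𝒮 I) s ∨
      Disjoint (oplus E (supportBelow 𝒮 I) s) K := by
  have hJI := oplus_supportBelow_subset (E := E) (𝒮 := 𝒮) hs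
  rcases h.isLaminar I hI K hK with hIK | hKI | hdisj
  · exact Or.inl (hJI.trans hIK)
  · obtain rfl | hKI := hKI.eq_or_ssubset
    · exact Or.inl hJI
    · by_cases hdisj : Disjoint (oplus E (supportBelow 𝒮 I) s) K
      · exact Or.inr (Or.inr hdisj)
      · obtain ⟨y, hyJ, hyK⟩ := not_disjoint_iff.1 hdisj
        exact Or.inr (Or.inl (h.subset_oplus_supportBelow hK hKI hyK hyJ))
  · exact Or.inr (Or.inr (hdisj.mono_left hJI))

theorem Nested.scc_sup_insert_oplus_supportBelow (h : Nested E 𝒮) (hI : I ∈ 𝒮) (hs : s ∈ I)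
    (h𝒯₀ : 𝒯₀ ⊆ 𝒮) (hdisj : ∀ A ∈ 𝒯₀, Disjoint A (oplus E (supportBelow 𝒮 I) s)) :
    scc E ((insert (oplus E (supportBelow 𝒮 I) s) 𝒯₀).sup id) s =
      oplus E (supportBelow 𝒮 I) s := by
  set D := supportBelow 𝒮 I
  set J := oplus E D s
  set U := (insert J 𝒯₀).sup id
  have hsJ : s ∈ J := self_mem_scc (mem_insert_self s D)
  have hJU : J ⊆ U := le_sup (f := id) (mem_insert_self _ _)
  have hs𝒯₀ : ∀ A ∈ 𝒯₀, s ∉ A := fun A hA hsA => disjoint_left.1 (hdisj A hA) hsA hsJ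
  have hImax : Maximal (· ∈ insert I 𝒯₀) I := by
    refine ⟨mem_insert_self _ _, fun A hA hIA => ?_⟩
    rcases mem_insert.1 hA with rfl | hA
    exacts [le_rfl, absurd (hIA hs) (hs𝒯₀ A hA)]
  have hUV : U ⊆ (insert I 𝒯₀).sup id := by
    simp only [U, sup_insert]
    exact sup_le_sup_right (oplus_supportBelow_subset hs) _
  have hsccI : scc E U s ⊆ I :=
    h.scc_sup_eq_of_maximal (insert_subset hI h𝒯₀) hImax hs ▸ scc_mono hUV
  -- a member of `𝒯₀` meeting `I` misses `s`, hence lies strictly below `I`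
  have hsccD : scc E U s ⊆ insert s D := by
    intro y hy
    obtain ⟨A, hA, hyA⟩ := mem_sup.1 (scc_subset hy)
    rcases mem_insert.1 hA with rfl | hA
    · exact scc_subset hyA
    · refine mem_insert_of_mem (mem_supportBelow.2 ⟨A, h𝒯₀ hA, ?_, hyA⟩)
      rcases h.isLaminar A (h𝒯₀ hA) I hI with hAI | hIA | hAI
      · exact ssubset_of_subset_not_subset hAI fun hIA => hs𝒯₀ A hA (hIA hs)
      · exact absurd (hIA hs) (hs𝒯₀ A hA)
      · exact absurd (hsccI hy) (disjoint_left.1 hAI hyA)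
  have hsU : s ∈ U := hJU hsJ
  exact ((stronglyConnected_scc hsU).subset_scc hsccD (self_mem_scc hsU)).antisymm
    ((stronglyConnected_scc (mem_insert_self s D)).subset_scc hJU hsJ)

theorem Nested.scc_sup_insert_oplus_supportBelow_of_mem (h : Nested E 𝒮) (hI : I ∈ 𝒮)
    (hs : s ∈ I) (h𝒯₀ : 𝒯₀ ⊆ 𝒮) (hpd : ∀ A ∈ 𝒯₀, ∀ B ∈ 𝒯₀, A ≠ B → Disjoint A B)
    (hdisj : ∀ A ∈ 𝒯₀, Disjoint A (oplus E (supportBelow 𝒮 I) s)) (hA : A ∈ 𝒯₀) (hx : x ∈ A) :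
    scc E ((insert (oplus E (supportBelow 𝒮 I) s) 𝒯₀).sup id) x = A := by
  classical
  set D := supportBelow 𝒮 I
  set J := oplus E D s
  set U := (insert J 𝒯₀).sup id
  -- `scc E U x` avoids `s`, and `U \ {s}` is covered by `𝒜`, in which `A` is maximal
  set 𝒜 := 𝒯₀ ∪ 𝒮.filter (· ⊆ J)
  have hxJ : x ∉ J := disjoint_left.1 (hdisj A hA) hx
  have hxU : x ∈ U := mem_sup.2 ⟨A, mem_insert_of_mem hA, hx⟩
  have hAmax : Maximal (· ∈ 𝒜) A := by
    refine ⟨mem_union_left _ hA, fun B hB hAB => ?_⟩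
    rcases mem_union.1 hB with hB | hB
    · by_cases hBA : B = A
      · exact hBA.le
      · exact absurd (hAB hx) (disjoint_left.1 (hpd A hA B hB (Ne.symm hBA)) hx)
    · exact absurd ((mem_filter.1 hB).2 (hAB hx)) hxJ
  have hsccJ : scc E U s = J := h.scc_sup_insert_oplus_supportBelow hI hs h𝒯₀ hdisj
  have hsx : s ∉ scc E U x := fun hsx => hxJ <| by
    rw [← hsccJ, scc_eq_of_mem hsx]
    exact self_mem_scc hxU
  have hcover : U.erase s ⊆ 𝒜.sup id := by
    intro y hy
    obtain ⟨hys, hyU⟩ := mem_erase.1 hy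
    obtain ⟨B, hB, hyB⟩ := mem_sup.1 hyU
    rcases mem_insert.1 hB with rfl | hB
    · obtain ⟨K, hK, hKI, hyK⟩ :=
        mem_supportBelow.1 ((mem_insert.1 (scc_subset hyB)).resolve_left hys)
      have hKJ := h.subset_oplus_supportBelow hK hKI hyK hyB
      exact mem_sup.2 ⟨K, mem_union_right _ (mem_filter.2 ⟨hK, hKJ⟩), hyK⟩
    · exact mem_sup.2 ⟨B, mem_union_left _ hB, hyB⟩
  have hscc𝒜 : scc E U x ⊆ 𝒜.sup id := fun y hy =>
    hcover (mem_erase.2 ⟨fun hys => hsx (hys ▸ hy), scc_subset hy⟩)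
  have h𝒜 : 𝒜 ⊆ 𝒮 := union_subset h𝒯₀ (filter_subset _ _)
  exact (h.scc_sup_eq_of_maximal h𝒜 hAmax hx ▸
    (stronglyConnected_scc hxU).subset_scc hscc𝒜 (self_mem_scc hxU)).antisymm
    ((h.1 A (h𝒯₀ hA)).subset_scc (le_sup (f := id) (mem_insert_of_mem hA)) hx)

theorem Nested.insert_oplus_supportBelow (h : Nested E 𝒮) (hI : I ∈ 𝒮) (hs : s ∈ I) :
    Nested E (insert (oplus E (supportBelow 𝒮 I) s) 𝒮) := by
  set J := oplus E (supportBelow 𝒮 I) s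
  refine ⟨(forall_mem_insert _ _ _).2 ⟨stronglyConnected_scc (mem_insert_self _ _), h.1⟩,
    h.isLaminar.insert fun K hK => h.oplus_supportBelow_comparable hI hs hK,
    fun 𝒯 h𝒯 hpd K hK x hx => ?_⟩
  by_cases hJ : J ∈ 𝒯
  · set 𝒯₀ := 𝒯.erase J
    have h𝒯₀ : 𝒯₀ ⊆ 𝒮 := subset_insert_iff.1 h𝒯
    have hpd₀ : ∀ A ∈ 𝒯₀, ∀ B ∈ 𝒯₀, A ≠ B → Disjoint A B := fun A hA B hB =>
      hpd A (mem_of_mem_erase hA) B (mem_of_mem_erase hB)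
    have hdisj : ∀ A ∈ 𝒯₀, Disjoint A J := fun A hA =>
      hpd A (mem_of_mem_erase hA) J hJ (ne_of_mem_erase hA)
    rw [← insert_erase hJ] at hK ⊢
    rcases mem_insert.1 hK with rfl | hK
    · have hsccJ : scc E _ s = J := h.scc_sup_insert_oplus_supportBelow hI hs h𝒯₀ hdisj
      rw [← hsccJ] at hx
      rw [scc_eq_of_mem hx, hsccJ]
    · exact h.scc_sup_insert_oplus_supportBelow_of_mem hI hs h𝒯₀ hpd₀ hdisj hK hx
  · exact h.2.2 𝒯 ((subset_insert_iff_of_notMem hJ).1 h𝒯) hpd K hK x hx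

theorem MaximalNested.eq_of_forall_subset (h𝒮 : MaximalNested E 𝒮) (hI : I ∈ 𝒮) (hs : s ∈ I)
    (ht : t ∈ I) (hsI : ∀ K ∈ 𝒮, s ∈ K → I ⊆ K) (htI : ∀ K ∈ 𝒮, t ∈ K → I ⊆ K) : s = t := by
  by_contra hst
  set J := oplus E (supportBelow 𝒮 I) s
  have htJ : t ∉ J := fun htJ => (mem_insert.1 (scc_subset htJ)).elim (fun hts => hst hts.symm)
    fun htD =>
      let ⟨K, hK, hKI, htK⟩ := mem_supportBelow.1 htD
      hKI.not_subset (htI K hK htK)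
  have hJ : J ∉ 𝒮 := fun hJ => htJ (hsI J hJ (self_mem_scc (mem_insert_self _ _)) ht)
  have hsupp : nsupport (insert J 𝒮) = nsupport 𝒮 := by
    rw [nsupport, sup_insert]
    exact sup_eq_right.2 ((oplus_supportBelow_subset hs).trans (le_sup (f := id) hI))
  exact hJ (h𝒮.2 _ (h𝒮.1.insert_oplus_supportBelow hI hs) hsupp (subset_insert _ _) ▸
    mem_insert_self _ _)

end Refinement

theorem stmt0_general (n : ℕ) (E : Fin n → Fin n → Prop)
    (𝒮 : Finset (Finset (Fin n))) (h𝒮 : MaximalNested E 𝒮) :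
    ∃ φ : Fin n → Finset (Fin n),
      (∀ s ∈ nsupport 𝒮, φ s ∈ 𝒮 ∧ s ∈ φ s ∧ ∀ J ∈ 𝒮, s ∈ J → φ s ⊆ J) ∧
      (∀ s ∈ nsupport 𝒮, ∀ t ∈ nsupport 𝒮, φ s = φ t → s = t) ∧
      (∀ I ∈ 𝒮, ∃ s ∈ nsupport 𝒮, φ s = I) := by
  choose! φ hφ using fun s (hs : s ∈ nsupport 𝒮) => h𝒮.1.isLaminar.exists_minimal_mem hs
  refine ⟨φ, hφ, fun s hs t ht hst => ?_, fun I hI => ?_⟩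
  · obtain ⟨hφs, hsφ, hsmin⟩ := hφ s hs
    obtain ⟨-, htφ, htmin⟩ := hφ t ht
    rw [← hst] at htφ htmin
    exact h𝒮.eq_of_forall_subset hφs hsφ htφ hsmin htmin
  · obtain ⟨s, hsI, hsmin⟩ := h𝒮.1.exists_mem_forall_subset hI
    have hs : s ∈ nsupport 𝒮 := mem_sup.2 ⟨I, hI, hsI⟩
    obtain ⟨hφs, hsφ, hφmin⟩ := hφ s hs
    exact ⟨s, hs, (hφmin I hI hsI).antisymm (hsmin _ hφs hsφ)⟩

/-- For a maximal nested collection `𝒮` with support `S`, the map sending each `s ∈ S` to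
the smallest member of `𝒮` containing `s` is well defined and a bijection from `S` to `𝒮`. -/
theorem stmt0 (n : ℕ) (E : Fin n → Fin n → Prop) (hE : ∀ i, ¬ E i i)
    (𝒮 : Finset (Finset (Fin n))) (h𝒮 : MaximalNested E 𝒮) :
    ∃ φ : Fin n → Finset (Fin n),
      (∀ s ∈ nsupport 𝒮, φ s ∈ 𝒮 ∧ s ∈ φ s ∧ ∀ J ∈ 𝒮, s ∈ J → φ s ⊆ J) ∧
      (∀ s ∈ nsupport 𝒮, ∀ t ∈ nsupport 𝒮, φ s = φ t → s = t) ∧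
      (∀ I ∈ 𝒮, ∃ s ∈ nsupport 𝒮, φ s = I) :=
  stmt0_general n E 𝒮 h𝒮
end

section
/- For any S ⊆ [n] and any vertex i ∈ [n], we have Y_{S ∪ {i}} = Y_{S ⊕ i} · Y_{S ⊖ i}. -/
open MvPolynomial

/-- The ambient field: rational functions in the indeterminates `A_1,…,A_n,X_1,…,X_n`. -/
abbrev Kn (n : ℕ) : Type := FractionRing (MvPolynomial (Fin n ⊕ Fin n) ℤ)

/-- The coefficient `A_i`, as an element of the ambient field. -/
noncomputable def AA {n : ℕ} (i : Fin n) : Kn n :=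
  algebraMap (MvPolynomial (Fin n ⊕ Fin n) ℤ) (Kn n) (X (Sum.inl i))

/-- The initial cluster variable `X_i`, as an element of the ambient field. -/
noncomputable def XX {n : ℕ} (i : Fin n) : Kn n :=
  algebraMap (MvPolynomial (Fin n ⊕ Fin n) ℤ) (Kn n) (X (Sum.inr i))

/-- `f` is acyclic on `I`: the only directed cycles in the graph `{i → f(i) : i ∈ I}`
are loops at fixed points. -/
def IsAcyclicOn {n : ℕ} (I : Finset (Fin n)) (f : Fin n → Fin n) : Prop :=
  ∀ i ∈ I, ∀ k : ℕ, 0 < k → (∀ r < k, f^[r] i ∈ I) → f^[k] i = i → f i = i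

open Classical in
/-- The numerator `N_I` of `Y_I`: the generating function of acyclic functions `f : I → [n]`
(encoded as functions `Fin n → Fin n` fixing every vertex outside `I`), where a fixed point
`i ∈ I` contributes `A_i` and a non-fixed point contributes `X_{f i}`. -/
noncomputable def Ynum {n : ℕ} (E : Fin n → Fin n → Prop) (I : Finset (Fin n)) :
    MvPolynomial (Fin n ⊕ Fin n) ℤ :=
  ∑ f : Fin n → Fin n,
    if (∀ i, i ∉ I → f i = i) ∧ (∀ i ∈ I, f i = i ∨ E i (f i)) ∧ IsAcyclicOn I f then
      ∏ i ∈ I, if f i = i then X (Sum.inl i) else X (Sum.inr (f i))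
    else 0

/-- The Laurent polynomial `Y_I` (with `Y_∅ = 1`). -/
noncomputable def YY {n : ℕ} (E : Fin n → Fin n → Prop) (I : Finset (Fin n)) : Kn n :=
  algebraMap (MvPolynomial (Fin n ⊕ Fin n) ℤ) (Kn n) (Ynum E I) / ∏ i ∈ I, XX i

open Classical in
/-- `P_S^{i,j}`: the sum of `Y_{S − p}` over all simple paths `p : i →_S j` in the graph,
whose intermediate vertices lie in `S`.  A path with `m` edges is encoded as an injective
map `v : Fin (m+1) → Fin n` whose consecutive values are edges. -/
noncomputable def PP {n : ℕ} (E : Fin n → Fin n → Prop) (S : Finset (Fin n)) (i j : Fin n) :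
    Kn n :=
  ∑ m ∈ Finset.range (n + 1), ∑ v : Fin (m + 1) → Fin n,
    if Function.Injective v ∧ v 0 = i ∧ v (Fin.last m) = j ∧
        (∀ r : Fin m, E (v r.castSucc) (v r.succ)) ∧
        (∀ r : Fin (m + 1), r ≠ 0 → r ≠ Fin.last m → v r ∈ S) then
      YY E (S \ Finset.image v Finset.univ)
    else 0

open Classical in
/-- The matrix `𝒴`, with diagonal entries `Y_{{i}}`, entries `−1` at edges of the graph,
and `0` elsewhere. -/
noncomputable def Ymat {n : ℕ} (E : Fin n → Fin n → Prop) : Matrix (Fin n) (Fin n) (Kn n) :=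
  Matrix.of fun i j => if i = j then YY E {i} else if E i j then -1 else 0

section Helpers

open Classical

variable {n : ℕ} {E : Fin n → Fin n → Prop}

/-- The defining condition on `f` in `Ynum E I`. -/
def Cond (E : Fin n → Fin n → Prop) (I : Finset (Fin n)) (f : Fin n → Fin n) : Prop :=
  (∀ i, i ∉ I → f i = i) ∧ (∀ i ∈ I, f i = i ∨ E i (f i)) ∧ IsAcyclicOn I f

/-- The weight of `f` on `I`. -/
noncomputable def wI {n : ℕ} (I : Finset (Fin n)) (f : Fin n → Fin n) :
    MvPolynomial (Fin n ⊕ Fin n) ℤ :=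
  ∏ i ∈ I, if f i = i then X (Sum.inl i) else X (Sum.inr (f i))

open Classical in
lemma Ynum_eq (E : Fin n → Fin n → Prop) (I : Finset (Fin n)) :
    Ynum E I = ∑ f : Fin n → Fin n, if Cond E I f then wI I f else 0 := by
  unfold Ynum Cond wI
  refine Finset.sum_congr rfl fun f _ => ?_
  congr 1

lemma reachIn_trans {U : Finset (Fin n)} {a b c : Fin n}
    (h1 : ReachIn E U a b) (h2 : ReachIn E U b c) : ReachIn E U a c :=
  Relation.ReflTransGen.trans h1 h2

lemma mem_scc_iff {U : Finset (Fin n)} {x y : Fin n} :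
    y ∈ scc E U x ↔ y ∈ U ∧ ReachIn E U x y ∧ ReachIn E U y x := by
  classical
  simp [scc]

lemma iter_agree {f g : Fin n → Fin n} {A : Finset (Fin n)} (hfg : ∀ x ∈ A, f x = g x)
    {a : Fin n} {k : ℕ} (h : ∀ r < k, f^[r] a ∈ A) : ∀ r ≤ k, g^[r] a = f^[r] a := by
  intro r hr
  induction r with
  | zero => rfl
  | succ m ih =>
    have hm : m < k := Nat.lt_of_succ_le hr
    rw [Function.iterate_succ_apply', Function.iterate_succ_apply', ih hm.le,
      ← hfg _ (h m hm)]

lemma reach_iter {U : Finset (Fin n)} {f : Fin n → Fin n} {a : Fin n} {k : ℕ}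
    (hU : ∀ r ≤ k, f^[r] a ∈ U)
    (hE : ∀ r < k, E (f^[r] a) (f^[r + 1] a)) :
    ∀ r s, r ≤ s → s ≤ k → ReachIn E U (f^[r] a) (f^[s] a) := by
  intro r s hrs hs
  induction s with
  | zero =>
    obtain rfl : r = 0 := Nat.le_zero.mp hrs
    exact Relation.ReflTransGen.refl
  | succ m ih =>
    rcases Nat.eq_or_lt_of_le hrs with h | h
    · subst h; exact Relation.ReflTransGen.refl
    · have hm : r ≤ m := Nat.lt_succ_iff.mp h
      exact (ih hm (Nat.le_of_succ_le hs)).tail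
        ⟨hE m (Nat.lt_of_succ_le hs), hU m (Nat.le_of_succ_le hs), hU (m + 1) hs⟩

/-- Restriction of `f` to `A` (identity outside `A`). -/
def resOn (A : Finset (Fin n)) (f : Fin n → Fin n) : Fin n → Fin n :=
  fun x => if x ∈ A then f x else x

/-- Combination of `g` on `A` with `h` outside `A`. -/
def comb (A : Finset (Fin n)) (g h : Fin n → Fin n) : Fin n → Fin n :=
  fun x => if x ∈ A then g x else h x

lemma cond_resOn {U A : Finset (Fin n)} (hA : A ⊆ U) {f : Fin n → Fin n}
    (hf : Cond E U f) : Cond E A (resOn A f) := by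
  obtain ⟨h1, h2, h3⟩ := hf
  refine ⟨fun x hx => if_neg hx, fun x hx => ?_, ?_⟩
  · have := h2 x (hA hx)
    rw [show resOn A f x = f x from if_pos hx]
    exact this
  · intro a ha k hk hin heq
    have key : ∀ r ≤ k, f^[r] a = (resOn A f)^[r] a :=
      iter_agree (fun x hx => if_pos hx) hin
    have hfa : f a = a := by
      refine h3 a (hA ha) k hk (fun r hr => hA ?_) ?_
      · rw [key r hr.le]; exact hin r hr
      · rw [key k le_rfl]; exact heq
    rw [show resOn A f a = f a from if_pos ha]
    exact hfa

lemma cond_comb {U : Finset (Fin n)} {i0 : Fin n} {g h : Fin n → Fin n}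
    (hg : Cond E (scc E U i0) g) (hh : Cond E (U \ scc E U i0) h) :
    Cond E U (comb (scc E U i0) g h) := by
  set A := scc E U i0 with hAdef
  set f := comb A g h with hfdef
  have hAU : A ⊆ U := Finset.filter_subset _ _
  have hout : ∀ x, x ∉ U → f x = x := by
    intro x hx
    have hxA : x ∉ A := fun hmem => hx (hAU hmem)
    have hxB : x ∉ U \ A := fun hmem => hx (Finset.mem_sdiff.mp hmem).1
    rw [show f x = h x from if_neg hxA]
    exact hh.1 x hxB
  have hedgeU : ∀ x ∈ U, f x = x ∨ E x (f x) := by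
    intro x hx
    by_cases hxA : x ∈ A
    · rw [show f x = g x from if_pos hxA]; exact hg.2.1 x hxA
    · rw [show f x = h x from if_neg hxA]
      exact hh.2.1 x (Finset.mem_sdiff.mpr ⟨hx, hxA⟩)
  refine ⟨hout, hedgeU, ?_⟩
  intro a ha k hk hin heq
  by_cases hfix : ∃ r < k, f (f^[r] a) = f^[r] a
  · obtain ⟨r, hr, hx⟩ := hfix
    have h1 : f^[k] a = f^[r] a := by
      have hkr : k = (k - r) + r := (Nat.sub_add_cancel hr.le).symm
      rw [hkr, Function.iterate_add_apply, Function.iterate_fixed hx]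
    have h2 : f^[r] a = a := h1.symm.trans heq
    rw [← h2]; exact hx
  · push_neg at hfix
    have hin' : ∀ r ≤ k, f^[r] a ∈ U := by
      intro r hr
      rcases Nat.lt_or_ge r k with hlt | hge
      · exact hin r hlt
      · have : r = k := le_antisymm hr hge
        rw [this, heq]; exact ha
    have hedge : ∀ r < k, E (f^[r] a) (f^[r + 1] a) := by
      intro r hr
      rcases hedgeU _ (hin r hr) with hfx | hfx
      · exact absurd hfx (hfix r hr)
      · rw [Function.iterate_succ_apply']
        exact hfx
    have hreach := reach_iter hin' hedge
    have hra : ∀ r ≤ k, ReachIn E U a (f^[r] a) := fun r hr =>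
      hreach 0 r (Nat.zero_le r) hr
    have har : ∀ r ≤ k, ReachIn E U (f^[r] a) a := by
      intro r hr
      have := hreach r k hr le_rfl
      rwa [heq] at this
    by_cases haA : a ∈ A
    · obtain ⟨haU, hia, hai⟩ := mem_scc_iff.mp haA
      have hAll : ∀ r < k, f^[r] a ∈ A := fun r hr =>
        mem_scc_iff.mpr ⟨hin r hr, reachIn_trans hia (hra r hr.le),
          reachIn_trans (har r hr.le) hai⟩
      have hfg : ∀ x ∈ A, f x = g x := fun x hx => if_pos hx
      have hit := iter_agree hfg hAll
      have hga : g a = a := by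
        refine hg.2.2 a haA k hk (fun r hr => ?_) ?_
        · rw [hit r hr.le]; exact hAll r hr
        · rw [hit k le_rfl]; exact heq
      rw [show f a = g a from if_pos haA]; exact hga
    · have haB : a ∈ U \ A := Finset.mem_sdiff.mpr ⟨ha, haA⟩
      have hAll : ∀ r < k, f^[r] a ∈ U \ A := by
        intro r hr
        refine Finset.mem_sdiff.mpr ⟨hin r hr, fun hmem => ?_⟩
        obtain ⟨_, hix, hxi⟩ := mem_scc_iff.mp hmem
        exact haA (mem_scc_iff.mpr ⟨ha, reachIn_trans hix (har r hr.le),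
          reachIn_trans (hra r hr.le) hxi⟩)
      have hfh : ∀ x ∈ U \ A, f x = h x := fun x hx =>
        if_neg (Finset.mem_sdiff.mp hx).2
      have hit := iter_agree hfh hAll
      have hha : h a = a := by
        refine hh.2.2 a haB k hk (fun r hr => ?_) ?_
        · rw [hit r hr.le]; exact hAll r hr
        · rw [hit k le_rfl]; exact heq
      rw [show f a = h a from if_neg haA]; exact hha

lemma comb_res {U A : Finset (Fin n)} (hA : A ⊆ U) {f : Fin n → Fin n}
    (hf : ∀ x, x ∉ U → f x = x) :
    comb A (resOn A f) (resOn (U \ A) f) = f := by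
  funext x
  by_cases hxA : x ∈ A
  · rw [show comb A (resOn A f) (resOn (U \ A) f) x = resOn A f x from if_pos hxA,
      show resOn A f x = f x from if_pos hxA]
  · rw [show comb A (resOn A f) (resOn (U \ A) f) x = resOn (U \ A) f x from if_neg hxA]
    by_cases hxU : x ∈ U
    · rw [show resOn (U \ A) f x = f x from if_pos (Finset.mem_sdiff.mpr ⟨hxU, hxA⟩)]
    · rw [show resOn (U \ A) f x = x from
        if_neg (fun hmem => hxU (Finset.mem_sdiff.mp hmem).1)]
      exact (hf x hxU).symm

lemma res_comb_left {A : Finset (Fin n)} {g h : Fin n → Fin n}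
    (hg : ∀ x, x ∉ A → g x = x) : resOn A (comb A g h) = g := by
  funext x
  by_cases hxA : x ∈ A
  · rw [show resOn A (comb A g h) x = comb A g h x from if_pos hxA,
      show comb A g h x = g x from if_pos hxA]
  · rw [show resOn A (comb A g h) x = x from if_neg hxA]
    exact (hg x hxA).symm

lemma res_comb_right {U A : Finset (Fin n)} {g h : Fin n → Fin n}
    (hh : ∀ x, x ∉ U \ A → h x = x) : resOn (U \ A) (comb A g h) = h := by
  funext x
  by_cases hxB : x ∈ U \ A
  · rw [show resOn (U \ A) (comb A g h) x = comb A g h x from if_pos hxB,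
      show comb A g h x = h x from if_neg (Finset.mem_sdiff.mp hxB).2]
  · rw [show resOn (U \ A) (comb A g h) x = x from if_neg hxB]
    exact (hh x hxB).symm

lemma wI_resOn {A : Finset (Fin n)} (f : Fin n → Fin n) : wI A (resOn A f) = wI A f := by
  refine Finset.prod_congr rfl fun x hx => ?_
  rw [show resOn A f x = f x from if_pos hx]

open Classical in
lemma Ynum_split {U : Finset (Fin n)} {i0 : Fin n} (hi0 : i0 ∈ U) :
    Ynum E U = Ynum E (scc E U i0) * Ynum E (U \ scc E U i0) := by
  classical
  set A := scc E U i0 with hAdef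
  have hAU : A ⊆ U := Finset.filter_subset _ _
  rw [Ynum_eq E U, Ynum_eq E A, Ynum_eq E (U \ A), ← Finset.sum_filter, ← Finset.sum_filter,
    ← Finset.sum_filter, Finset.sum_mul_sum]
  rw [← Finset.sum_product']
  refine Finset.sum_nbij' (fun f => (resOn A f, resOn (U \ A) f))
    (fun p => comb A p.1 p.2) ?_ ?_ ?_ ?_ ?_
  · intro f hf
    rw [Finset.mem_filter] at hf
    exact Finset.mem_product.mpr
      ⟨Finset.mem_filter.mpr ⟨Finset.mem_univ _, cond_resOn hAU hf.2⟩,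
       Finset.mem_filter.mpr ⟨Finset.mem_univ _, cond_resOn Finset.sdiff_subset hf.2⟩⟩
  · intro p hp
    rw [Finset.mem_product, Finset.mem_filter, Finset.mem_filter] at hp
    exact Finset.mem_filter.mpr ⟨Finset.mem_univ _, cond_comb hp.1.2 hp.2.2⟩
  · intro f hf
    rw [Finset.mem_filter] at hf
    exact comb_res hAU hf.2.1
  · intro p hp
    rw [Finset.mem_product, Finset.mem_filter, Finset.mem_filter] at hp
    exact Prod.ext (res_comb_left hp.1.2.1) (res_comb_right hp.2.2.1)
  · intro f hf
    show wI U f = wI A (resOn A f) * wI (U \ A) (resOn (U \ A) f)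
    rw [wI_resOn, wI_resOn, wI, wI, wI, ← Finset.prod_union Finset.disjoint_sdiff,
      Finset.union_sdiff_of_subset hAU]

/-- `Y_{S ∪ {i}} = Y_{S ⊕ i} · Y_{S ⊖ i}`. -/
theorem stmt6 (n : ℕ) (E : Fin n → Fin n → Prop) (hE : ∀ i, ¬ E i i)
    (S : Finset (Fin n)) (i : Fin n) :
    YY E (insert i S) = YY E (oplus E S i) * YY E (ominus E S i) := by
  classical
  have hi : i ∈ insert i S := Finset.mem_insert_self i S
  have hnum : Ynum E (insert i S) = Ynum E (oplus E S i) * Ynum E (ominus E S i) :=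
    Ynum_split hi
  have hAU : oplus E S i ⊆ insert i S := Finset.filter_subset _ _
  have hden : (∏ x ∈ insert i S, XX x)
      = (∏ x ∈ oplus E S i, XX x) * ∏ x ∈ ominus E S i, XX x := by
    rw [ominus, ← Finset.prod_union Finset.disjoint_sdiff,
      Finset.union_sdiff_of_subset hAU]
  rw [YY, YY, YY, hnum, map_mul, hden, div_mul_div_comm]

end Helpers
end

section
/- Let I ⊆ [n] be strongly connected. Then the numerator N_I = Σ_{acyclic f : I → [n]} ∏_{i ∈ I} X̃_{f(i)} of Y_I is an irreducible element of the polynomial ring ℤ[A_1,…,A_n, X_1,…,X_n]. Moreover, for distinct strongly connected subsets I ≠ J of [n], the numerators N_I and N_J are coprime (they have no common non-unit factor). -/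
open MvPolynomial

/-!
Split the variables into the `A_i` and the `X_j`, so that `N_I` becomes a polynomial in the `A_i`
over `ℤ[X]`. It is multilinear, its `A`-variables are exactly those indexed by `I`, and its
coefficient at `∏_{i ∈ I} A_i` is `1` (from `f = id`). In a factorisation `N_I = F G` the factors
therefore use complementary sets `S`, `I \ S` of `A`-variables, and writing `N_U` for the
coefficient of `∏_{i ∈ U} A_i`, this forces `N_{I \ W} = N_{I \ (W ∩ S)} · N_{I \ (W \ S)}`.
When `S` and `I \ S` are both nonempty, strong connectivity gives a map `g` along edges that
permutes a set `V ⊆ I` and whose every orbit in `V` meets both `S` and `I \ S`. Moving the points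
of `V ∩ S` (resp. `V \ S`) by `g` is acyclic, so `∏_{v ∈ V} X_v` occurs on the right; it does not
occur on the left, since an acyclic `f` moving exactly `V` cannot permute `V`.

For coprimality: `N_I ∣ N_J` forces every `A_i`, `i ∈ I`, to occur in `N_J`, so `I ⊆ J`.
-/

section Iterate

open Function

variable {α : Type*} {f : α → α} {s : Set α} {x : α}

theorem Set.InjOn.mem_periodicPts (hs : s.Finite) (hf : Set.MapsTo f s s)
    (hinj : Set.InjOn f s) (hx : x ∈ s) : x ∈ periodicPts f := by
  have : Finite s := hs
  obtain ⟨k, hk, hper⟩ :=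
    Function.mem_periodicPts.mp ((hf.restrict_inj.mpr hinj).mem_periodicPts ⟨x, hx⟩)
  refine mk_mem_periodicPts hk ?_
  have := congrArg Subtype.val hper
  rwa [Set.MapsTo.iterate_restrict, Set.MapsTo.val_restrict_apply] at this

theorem Set.MapsTo.exists_mem_periodicPts [Finite α] (hf : Set.MapsTo f s s) (hx : x ∈ s) :
    ∃ y ∈ s, y ∈ periodicPts f := by
  obtain ⟨a, b, hab, h⟩ := Finite.exists_ne_map_eq_of_infinite fun r => f^[r] x
  wlog hlt : a < b generalizing a b
  · exact this b a hab.symm h.symm (by omega)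
  refine ⟨f^[a] x, hf.iterate a hx, mk_mem_periodicPts (Nat.sub_pos_of_lt hlt) ?_⟩
  change f^[b - a] (f^[a] x) = f^[a] x
  rw [← iterate_add_apply, Nat.sub_add_cancel hlt.le]
  exact h.symm

theorem exists_iterate_mem_of_descent {I Z : Set α} (h : α → ℕ)
    (hf : ∀ z ∈ I, z ∉ Z → f z ∈ I ∧ h (f z) < h z) : ∀ z ∈ I, ∃ r, f^[r] z ∈ Z := by
  intro z hz
  induction hk : h z using Nat.strong_induction_on generalizing z with
  | _ k ih =>
    by_cases hzZ : z ∈ Z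
    · exact ⟨0, hzZ⟩
    obtain ⟨hfz, hlt⟩ := hf z hz hzZ
    obtain ⟨r, hr⟩ := ih _ (hk ▸ hlt) (f z) hfz rfl
    exact ⟨r + 1, hr⟩

end Iterate

theorem Relation.ReflTransGen.exists_crossing_step {α : Type*} {r : α → α → Prop}
    {p : α → Prop} {a b : α} (h : Relation.ReflTransGen r a b) (ha : ¬ p a) (hb : p b) :
    ∃ x y, r x y ∧ ¬ p x ∧ p y := by
  induction h with
  | refl => exact absurd hb ha
  | @tail c d _ hcd ih =>
    by_cases hc : p c
    · exact ih hc
    · exact ⟨c, d, hcd, hc, hb⟩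

section Indicator

variable {σ : Type*}

noncomputable def indicatorExp (U : Finset σ) : σ →₀ ℕ := ∑ i ∈ U, Finsupp.single i 1

variable [DecidableEq σ]

theorem indicatorExp_apply (U : Finset σ) (i : σ) :
    indicatorExp U i = if i ∈ U then 1 else 0 := by
  simp [indicatorExp, Finsupp.finsetSum_apply, Finsupp.single_apply]

theorem indicatorExp_injective : Function.Injective (indicatorExp : Finset σ → σ →₀ ℕ) := by
  intro U V h
  ext i
  have := DFunLike.congr_fun h i
  simp only [indicatorExp_apply] at this
  split_ifs at this <;> simp_all

theorem indicatorExp_mono {U V : Finset σ} (h : U ⊆ V) : indicatorExp U ≤ indicatorExp V := by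
  intro i
  simp only [indicatorExp_apply]
  split_ifs with hU hV
  exacts [le_rfl, absurd (h hU) hV, Nat.zero_le _, le_rfl]

theorem indicatorExp_sub (U V : Finset σ) :
    indicatorExp U - indicatorExp V = indicatorExp (U \ V) := by
  ext i
  simp only [Finsupp.coe_tsub, Pi.sub_apply, indicatorExp_apply, Finset.mem_sdiff]
  split_ifs <;> simp_all

theorem indicatorExp_filter (U : Finset σ) (p : σ → Prop) [DecidablePred p] :
    (indicatorExp U).filter p = indicatorExp (U.filter p) := by
  ext i
  simp only [Finsupp.filter_apply, indicatorExp_apply, Finset.mem_filter]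
  split_ifs <;> simp_all

end Indicator

namespace MvPolynomial

variable {σ R : Type*}

section CommSemiring

variable [CommSemiring R] {F G P : MvPolynomial σ R}

theorem coeff_mul_of_vars_subset [DecidableEq σ] {S : Finset σ} (hF : F.vars ⊆ S)
    (hG : Disjoint G.vars S) (d : σ →₀ ℕ) :
    coeff d (F * G) = coeff (d.filter (· ∈ S)) F * coeff (d.filter (· ∉ S)) G := by
  rw [coeff_mul, Finset.sum_eq_single (d.filter (· ∈ S), d.filter (· ∉ S))]
  · rintro ⟨a, b⟩ hab hne
    rw [Finset.HasAntidiagonal.mem_antidiagonal] at hab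
    by_contra h
    have haS : ∀ i, a i ≠ 0 → i ∈ S := fun i hi => hF <| (mem_vars_iff_mem_support i).mpr
      ⟨a, mem_support_iff.mpr (left_ne_zero_of_mul h), Finsupp.mem_support_iff.mpr hi⟩
    have hbS : ∀ i, b i ≠ 0 → i ∉ S := fun i hi => Finset.disjoint_left.mp hG <|
      (mem_vars_iff_mem_support i).mpr
        ⟨b, mem_support_iff.mpr (right_ne_zero_of_mul h), Finsupp.mem_support_iff.mpr hi⟩
    refine hne (Prod.ext ?_ ?_) <;> ext i <;> by_cases hi : i ∈ S <;>
      simp only [Finsupp.filter_apply, hi, ← hab, Finsupp.add_apply, if_true, if_false,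
        not_true, not_false_eq_true] <;> grind
  · intro h
    exact absurd
      (Finset.HasAntidiagonal.mem_antidiagonal.mpr (Finsupp.filter_add_filter_not d _)) h

theorem coeff_tsub_mul_coeff [DecidableEq σ] {S : Finset σ} (hF : F.vars ⊆ S)
    (hG : Disjoint G.vars S) (e w : σ →₀ ℕ) :
    coeff (e - w) (F * G) * coeff e (F * G) =
      coeff (e - w.filter (· ∈ S)) (F * G) * coeff (e - w.filter (· ∉ S)) (F * G) := by
  simp only [coeff_mul_of_vars_subset hF hG]
  have hS : (e - w.filter (· ∈ S)).filter (· ∈ S) = (e - w).filter (· ∈ S) := by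
    ext i; by_cases hi : i ∈ S <;> simp [hi]
  have hSc : (e - w.filter (· ∉ S)).filter (· ∉ S) = (e - w).filter (· ∉ S) := by
    ext i; by_cases hi : i ∈ S <;> simp [hi]
  have hS' : (e - w.filter (· ∉ S)).filter (· ∈ S) = e.filter (· ∈ S) := by
    ext i; by_cases hi : i ∈ S <;> simp [hi]
  have hSc' : (e - w.filter (· ∈ S)).filter (· ∉ S) = e.filter (· ∉ S) := by
    ext i; by_cases hi : i ∈ S <;> simp [hi]
  rw [hS, hSc, hS', hSc']
  ring

theorem vars_subset_of_le_indicatorExp [DecidableEq σ] {I : Finset σ}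
    (hP : ∀ d ∈ P.support, d ≤ indicatorExp I) : P.vars ⊆ I := by
  intro i hi
  obtain ⟨d, hd, hid⟩ := (mem_vars_iff_mem_support i).mp hi
  have := hP d hd i
  rw [indicatorExp_apply] at this
  by_contra hiI
  simp [hiI, Finsupp.mem_support_iff] at this hid
  exact hid this

theorem subset_vars_of_coeff_indicatorExp_ne_zero [DecidableEq σ] {I : Finset σ}
    (h : coeff (indicatorExp I) P ≠ 0) : I ⊆ P.vars := fun i hi =>
  (mem_vars_iff_mem_support i).mpr
    ⟨_, mem_support_iff.mpr h, by simp [Finsupp.mem_support_iff, indicatorExp_apply, hi]⟩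

theorem degreeOf_le_one_of_le_indicatorExp [DecidableEq σ] {I : Finset σ}
    (hP : ∀ d ∈ P.support, d ≤ indicatorExp I) (i : σ) : degreeOf i P ≤ 1 :=
  degreeOf_le_iff.mpr fun d hd =>
    (hP d hd i).trans (by rw [indicatorExp_apply]; split_ifs <;> simp)

theorem isUnit_of_vars_eq_empty {e : σ →₀ ℕ} (h : coeff e (F * G) = 1) (hF : F.vars = ∅) :
    IsUnit F := by
  rw [vars_eq_empty_iff_eq_C] at hF
  rw [hF, coeff_C_mul] at h
  rw [hF]
  exact (IsUnit.of_mul_eq_one _ h).map C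

end CommSemiring

section Domain

variable [CommRing R] [IsDomain R] {F G P : MvPolynomial σ R}

theorem vars_subset_of_dvd (h : F ∣ G) (hG : G ≠ 0) : F.vars ⊆ G.vars := by
  obtain ⟨H, rfl⟩ := h
  intro i hi
  rw [mem_vars_iff_degreeOf_ne_zero] at hi ⊢
  rw [degreeOf_mul_eq (left_ne_zero_of_mul hG) (right_ne_zero_of_mul hG)]
  omega

theorem disjoint_vars_of_degreeOf_mul_le_one (hF : F ≠ 0) (hG : G ≠ 0)
    (h : ∀ i, degreeOf i (F * G) ≤ 1) : Disjoint F.vars G.vars := by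
  rw [Finset.disjoint_left]
  intro i hiF hiG
  rw [mem_vars_iff_degreeOf_ne_zero] at hiF hiG
  have := h i
  rw [degreeOf_mul_eq hF hG] at this
  omega

/-- A factorisation `P = F * G` splits `I` into the variables `S` of `F` and `I \ S` of `G`,
and then `coeff_tsub_mul_coeff` contradicts `hsplit`. -/
theorem irreducible_of_forall_exists_coeff_ne [DecidableEq σ] {I : Finset σ} (hI : I.Nonempty)
    (hP : ∀ d ∈ P.support, d ≤ indicatorExp I) (htop : coeff (indicatorExp I) P = 1)
    (hsplit : ∀ S ⊆ I, S.Nonempty → (I \ S).Nonempty → ∃ W : Finset σ,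
      coeff (indicatorExp (I \ W)) P ≠
        coeff (indicatorExp (I \ W.filter (· ∈ S))) P *
          coeff (indicatorExp (I \ W.filter (· ∉ S))) P) :
    Irreducible P := by
  have hP0 : P ≠ 0 := fun h => by simp [h] at htop
  have hvars : P.vars ⊆ I := vars_subset_of_le_indicatorExp hP
  have hIvars : I ⊆ P.vars := subset_vars_of_coeff_indicatorExp_ne_zero (by simp [htop])
  refine ⟨fun hu => ?_, fun F G hFG => ?_⟩
  · have := hIvars.trans (vars_subset_of_dvd hu.dvd one_ne_zero)
    rw [vars_one] at this
    exact Finset.not_nonempty_empty (hI.mono this)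
  by_contra! hFG'
  obtain ⟨hFu, hGu⟩ := hFG'
  subst hFG
  have hFI : F.vars ⊆ I := (vars_subset_of_dvd (dvd_mul_right F G) hP0).trans hvars
  have hGI : G.vars ⊆ I := (vars_subset_of_dvd (dvd_mul_left G F) hP0).trans hvars
  have hdisj := disjoint_vars_of_degreeOf_mul_le_one (left_ne_zero_of_mul hP0)
    (right_ne_zero_of_mul hP0) (degreeOf_le_one_of_le_indicatorExp hP)
  have hS : F.vars.Nonempty := Finset.nonempty_iff_ne_empty.mpr fun h =>
    hFu (isUnit_of_vars_eq_empty htop h)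
  have hT : (I \ F.vars).Nonempty := by
    refine Finset.nonempty_iff_ne_empty.mpr fun h => hGu (isUnit_of_vars_eq_empty (F := G)
      (by rwa [mul_comm]) (Finset.subset_empty.mp ?_))
    exact fun i hi => h ▸ Finset.mem_sdiff.mpr
      ⟨hGI hi, Finset.disjoint_right.mp hdisj hi⟩
  obtain ⟨W, hW⟩ := hsplit F.vars hFI hS hT
  have := coeff_tsub_mul_coeff le_rfl hdisj.symm (indicatorExp I) (indicatorExp W)
  rw [htop, mul_one, indicatorExp_filter, indicatorExp_filter, indicatorExp_sub,
    indicatorExp_sub, indicatorExp_sub] at this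
  exact hW this

end Domain

theorem add_mem_support_mul_of_nonneg [CommRing R] [LinearOrder R] [IsStrictOrderedRing R]
    {p q : MvPolynomial σ R} (hp : ∀ d, 0 ≤ coeff d p) (hq : ∀ d, 0 ≤ coeff d q)
    {a b : σ →₀ ℕ} (ha : a ∈ p.support) (hb : b ∈ q.support) : a + b ∈ (p * q).support := by
  classical
  rw [mem_support_iff] at ha hb ⊢
  rw [coeff_mul]
  refine (Finset.sum_pos' (fun x _ => mul_nonneg (hp _) (hq _))
    ⟨(a, b), Finset.HasAntidiagonal.mem_antidiagonal.mpr rfl, ?_⟩).ne'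
  exact mul_pos ((hp a).lt_of_ne' ha) ((hq b).lt_of_ne' hb)

end MvPolynomial

section Graph

variable {n : ℕ} (E : Fin n → Fin n → Prop)

/-- `g` is an in-forest towards `Z` and `h` its depth; it is grown one vertex at a time along an
edge entering `Z`. -/
theorem exists_descent_map (I Z : Finset (Fin n)) (hZ : ∀ z ∈ I, ∃ t ∈ Z, ReachIn E I z t) :
    ∃ (g : Fin n → Fin n) (h : Fin n → ℕ),
      ∀ z ∈ I, z ∉ Z → E z (g z) ∧ g z ∈ I ∧ h (g z) < h z := by
  classical
  induction hk : (I \ Z).card using Nat.strong_induction_on generalizing Z with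
  | _ k ih =>
    by_cases hIZ : I ⊆ Z
    · exact ⟨id, 0, fun z hz hzZ => absurd (hIZ hz) hzZ⟩
    obtain ⟨u, huI, huZ⟩ := Finset.not_subset.mp hIZ
    obtain ⟨t, htZ, hut⟩ := hZ u huI
    obtain ⟨x, y, ⟨hxy, hxI, hyI⟩, hxZ, hyZ⟩ :=
      hut.exists_crossing_step (p := (· ∈ Z)) huZ htZ
    have hlt : (I \ insert x Z).card < k := hk ▸ Finset.card_lt_card
      ⟨Finset.sdiff_subset_sdiff le_rfl (Finset.subset_insert _ _),
        Finset.not_subset.mpr ⟨x, Finset.mem_sdiff.mpr ⟨hxI, hxZ⟩, by simp⟩⟩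
    obtain ⟨g, h, hgh⟩ := ih _ hlt (insert x Z)
      (fun z hz => (hZ z hz).imp fun _ ⟨ht, hzt⟩ => ⟨Finset.mem_insert_of_mem ht, hzt⟩) rfl
    refine ⟨Function.update g x y, fun z => if z ∈ Z then 0 else h z + 1, fun z hz hzZ => ?_⟩
    by_cases hzx : z = x
    · subst hzx
      simp [hxy, hyI, hyZ, hzZ]
    · obtain ⟨h₁, h₂, h₃⟩ := hgh z hz (by simp [hzx, hzZ])
      simp only [Function.update_of_ne hzx, hzZ, if_false]
      refine ⟨h₁, h₂, ?_⟩
      split_ifs <;> omega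

/-- `g` follows an in-forest towards `I \ S` on `S` and one towards `S` on `I \ S`, so none of
its orbits stays in one part; `V` is its set of periodic points in `I`. -/
theorem exists_bijOn_visiting_both {I S : Finset (Fin n)} (hI : StronglyConnected E I)
    (hSI : S ⊆ I) (hS : S.Nonempty) (hT : (I \ S).Nonempty) :
    ∃ (g : Fin n → Fin n) (V : Finset (Fin n)), V ⊆ I ∧ V.Nonempty ∧ Set.BijOn g V V ∧
      (∀ v ∈ V, E v (g v)) ∧ (∀ v ∈ V, ∃ r, g^[r] v ∉ S) ∧ ∀ v ∈ V, ∃ r, g^[r] v ∈ S := by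
  classical
  have hreach : ∀ Z ⊆ I, Z.Nonempty → ∀ z ∈ I, ∃ t ∈ Z, ReachIn E I z t :=
    fun Z hZ ⟨t, ht⟩ z hz => ⟨t, ht, hI.2 z hz t (hZ ht)⟩
  obtain ⟨g₁, h₁, hg₁⟩ := exists_descent_map E I (I \ S) (hreach _ Finset.sdiff_subset hT)
  obtain ⟨g₂, h₂, hg₂⟩ := exists_descent_map E I S (hreach S hSI hS)
  set g := S.piecewise g₁ g₂
  have hg₁' : ∀ z ∈ I, z ∉ I \ S → E z (g z) ∧ g z ∈ I ∧ h₁ (g z) < h₁ z := fun z hz hzT => by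
    have hzS : z ∈ S := by simpa [hz] using hzT
    simpa [g, hzS] using hg₁ z hz hzT
  have hg₂' : ∀ z ∈ I, z ∉ S → E z (g z) ∧ g z ∈ I ∧ h₂ (g z) < h₂ z := fun z hz hzS => by
    simpa [g, hzS] using hg₂ z hz hzS
  have hedge : ∀ z ∈ I, E z (g z) ∧ g z ∈ I := fun z hz => by
    by_cases hzS : z ∈ S
    · exact (hg₁' z hz (by simp [hzS])).imp_right And.left
    · exact (hg₂' z hz hzS).imp_right And.left
  have hmaps : Set.MapsTo g I I := fun z hz => (hedge z hz).2
  set V := I.filter (· ∈ Function.periodicPts g)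
  have hVI : V ⊆ I := Finset.filter_subset _ _
  have hVmaps : Set.MapsTo g V V := fun v hv => by
    rw [Finset.mem_coe, Finset.mem_filter] at hv ⊢
    exact ⟨hmaps hv.1, (Function.bijOn_periodicPts g).mapsTo hv.2⟩
  obtain ⟨s, hs⟩ := hS
  obtain ⟨v, hvI, hv⟩ := hmaps.exists_mem_periodicPts (Finset.mem_coe.mpr (hSI hs))
  refine ⟨g, V, hVI, ⟨v, Finset.mem_filter.mpr ⟨hvI, hv⟩⟩,
    (V.finite_toSet.injOn_iff_bijOn_of_mapsTo hVmaps).mp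
      ((Function.bijOn_periodicPts g).injOn.mono fun v hv => (Finset.mem_filter.mp hv).2),
    fun v hv => (hedge v (hVI hv)).1, fun v hv => ?_, fun v hv => ?_⟩
  · obtain ⟨r, hr⟩ := exists_iterate_mem_of_descent h₁
      (fun z hz hzT => (hg₁' z hz hzT).2) v (Finset.mem_coe.mpr (hVI hv))
    exact ⟨r, (Finset.mem_sdiff.mp hr).2⟩
  · exact exists_iterate_mem_of_descent h₂ (fun z hz hzS => (hg₂' z hz hzS).2) v
      (Finset.mem_coe.mpr (hVI hv))

end Graph

section Numerator

open MvPolynomial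

variable {n : ℕ} (E : Fin n → Fin n → Prop)

def IsAdmissible (I : Finset (Fin n)) (f : Fin n → Fin n) : Prop :=
  (∀ i, i ∉ I → f i = i) ∧ (∀ i ∈ I, f i = i ∨ E i (f i)) ∧ IsAcyclicOn I f

open Classical in
theorem sumRingEquiv_Ynum (I : Finset (Fin n)) :
    sumRingEquiv ℤ (Fin n) (Fin n) (Ynum E I) = ∑ f : Fin n → Fin n,
      if IsAdmissible E I f then
        monomial (indicatorExp (I.filter fun i => f i = i))
          (∏ i ∈ I.filter (fun i => f i ≠ i), X (f i))
      else 0 := by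
  rw [Ynum, map_sum]
  refine Finset.sum_congr rfl fun f _ => ?_
  unfold IsAdmissible
  split_ifs
  · rw [map_prod]
    simp only [apply_ite (sumRingEquiv ℤ (Fin n) (Fin n)), sumRingEquiv_X_inl,
      sumRingEquiv_X_inr, Finset.prod_ite]
    rw [← map_prod C, indicatorExp, monomial_sum_index]
    exact mul_comm _ _
  · exact map_zero _

theorem IsAcyclicOn.sum_single_ne {I C : Finset (Fin n)} {f : Fin n → Fin n}
    (hf : IsAcyclicOn I f) (hCI : C ⊆ I) (hC : C.Nonempty) (hmove : ∀ c ∈ C, f c ≠ c) :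
    ∑ c ∈ C, Finsupp.single (f c) 1 ≠ ∑ c ∈ C, Finsupp.single c 1 := by
  intro h
  have hmap : C.val.map f = C.val := by
    have := congrArg Finsupp.toMultiset h
    simp only [Finsupp.toMultiset_sum, Finsupp.toMultiset_single, one_nsmul] at this
    calc C.val.map f = ((C.val.map f).map fun a => {a}).sum := (Multiset.sum_map_singleton _).symm
      _ = ∑ c ∈ C, {f c} := by rw [Multiset.map_map]; rfl
      _ = C.val := this.trans (Multiset.sum_map_singleton _)
  have hmaps : Set.MapsTo f C C := fun c hc => by
    rw [Finset.mem_coe, ← Finset.mem_val, ← hmap]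
    exact Multiset.mem_map_of_mem f hc
  have hinj : Set.InjOn f C :=
    (Multiset.nodup_map_iff_inj_on C.nodup).mp (by rw [hmap]; exact C.nodup)
  obtain ⟨c, hc⟩ := hC
  obtain ⟨k, hk, hper⟩ :=
    Function.mem_periodicPts.mp (hinj.mem_periodicPts C.finite_toSet hmaps hc)
  exact hmove c hc (hf c (hCI hc) k hk (fun r _ => hCI (hmaps.iterate r hc)) hper)

theorem isAdmissible_piecewise {I B : Finset (Fin n)} {g : Fin n → Fin n}
    (hBI : B ⊆ I) (hedge : ∀ b ∈ B, E b (g b)) (hesc : ∀ b ∈ B, ∃ r, g^[r] b ∉ B) :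
    IsAdmissible E I (B.piecewise g id) := by
  set f := B.piecewise g id
  have hfix : ∀ i ∉ B, f i = i := fun i hi => B.piecewise_eq_of_notMem _ _ hi
  have hmoveB : ∀ i ∈ B, f i = g i := fun i hi => B.piecewise_eq_of_mem _ _ hi
  refine ⟨fun i hi => hfix i fun h => hi (hBI h), fun i _ => ?_, fun i _ k hk _ hper => ?_⟩
  · by_cases hiB : i ∈ B
    · exact Or.inr (by simpa [f, hiB] using hedge i hiB)
    · exact Or.inl (hfix i hiB)
  by_contra hmove
  have hiB : i ∈ B := by_contra fun h => hmove (hfix i h)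
  -- a periodic orbit that left `B` would be stuck at a fixed point outside `B`
  have hstay : ∀ r, f^[r] i ∈ B := by
    intro r
    by_contra hr
    have hback : f^[k * r] i = i := (show Function.IsPeriodicPt f k i from hper).mul_const r
    have hle : r ≤ k * r := Nat.le_mul_of_pos_left r hk
    rw [← Nat.sub_add_cancel hle, Function.iterate_add_apply,
      ((show Function.IsFixedPt f _ from hfix _ hr).iterate _).eq] at hback
    exact hr (by rw [hback]; exact hiB)
  have hiter : ∀ r, f^[r] i = g^[r] i := by
    intro r
    induction r with
    | zero => rfl
    | succ r ih =>
      rw [Function.iterate_succ_apply', Function.iterate_succ_apply', ← ih, hmoveB _ (hstay r)]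
  obtain ⟨r, hr⟩ := hesc i hiB
  exact hr (hiter r ▸ hstay r)

/-- The coefficient of `∏_{i ∈ U} A_i` in `N_I`, as a polynomial in the `X_j`. -/
noncomputable def slice (I U : Finset (Fin n)) : MvPolynomial (Fin n) ℤ :=
  coeff (indicatorExp U) (sumRingEquiv ℤ (Fin n) (Fin n) (Ynum E I))

open Classical in
theorem slice_eq (I U : Finset (Fin n)) :
    slice E I U = ∑ f : Fin n → Fin n,
      if IsAdmissible E I f ∧ I.filter (fun i => f i = i) = U then
        ∏ i ∈ I.filter (fun i => f i ≠ i), X (f i)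
      else 0 := by
  rw [slice, sumRingEquiv_Ynum, coeff_sum]
  refine Finset.sum_congr rfl fun f _ => ?_
  by_cases hf : IsAdmissible E I f
  · simp [hf, coeff_monomial, indicatorExp_injective.eq_iff, eq_comm]
  · simp [hf]

open Classical in
theorem coeff_slice (I U : Finset (Fin n)) (m : Fin n →₀ ℕ) :
    coeff m (slice E I U) = (Finset.univ.filter fun f : Fin n → Fin n =>
      IsAdmissible E I f ∧ I.filter (fun i => f i = i) = U ∧
        ∑ i ∈ I.filter (fun i => f i ≠ i), Finsupp.single (f i) 1 = m).card := by
  rw [slice_eq, coeff_sum, Finset.natCast_card_filter]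
  refine Finset.sum_congr rfl fun f _ => ?_
  by_cases h : IsAdmissible E I f ∧ I.filter (fun i => f i = i) = U
  · have hX : ∏ i ∈ I.filter (fun i => f i ≠ i), (X (f i) : MvPolynomial (Fin n) ℤ) =
        monomial (∑ i ∈ I.filter (fun i => f i ≠ i), Finsupp.single (f i) 1) 1 :=
      (monomial_sum_one _ _).symm
    rw [if_pos h, hX, coeff_monomial]
    simp only [h, true_and]
  · rw [if_neg h, coeff_zero, if_neg fun h' => h ⟨h'.1, h'.2.1⟩]

theorem coeff_slice_nonneg (I U : Finset (Fin n)) (m : Fin n →₀ ℕ) :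
    0 ≤ coeff m (slice E I U) := by
  rw [coeff_slice]
  positivity

theorem isAdmissible_id (I : Finset (Fin n)) : IsAdmissible E I id :=
  ⟨fun _ _ => rfl, fun _ _ => Or.inl rfl, fun _ _ _ _ _ _ => rfl⟩

theorem slice_self (I : Finset (Fin n)) : slice E I I = 1 := by
  classical
  rw [slice_eq, Finset.sum_eq_single id]
  · simp [isAdmissible_id]
  · rintro f - hf
    refine if_neg fun ⟨hadm, hfix⟩ => hf (funext fun i => ?_)
    by_cases hi : i ∈ I
    · exact (Finset.filter_eq_self.mp hfix i hi)
    · exact hadm.1 i hi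
  · simp

theorem le_indicatorExp_of_mem_support (I : Finset (Fin n)) :
    ∀ d ∈ (sumRingEquiv ℤ (Fin n) (Fin n) (Ynum E I)).support, d ≤ indicatorExp I := by
  classical
  intro d hd
  rw [mem_support_iff, sumRingEquiv_Ynum, coeff_sum] at hd
  obtain ⟨f, -, hf⟩ := Finset.exists_ne_zero_of_sum_ne_zero hd
  split_ifs at hf
  · rw [coeff_monomial] at hf
    split_ifs at hf with h
    · exact h ▸ indicatorExp_mono (Finset.filter_subset _ _)
    · exact absurd rfl hf
  · exact absurd (coeff_zero d) hf

theorem coeff_slice_sdiff_eq_zero {I C : Finset (Fin n)} (hCI : C ⊆ I) (hC : C.Nonempty) :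
    coeff (indicatorExp C) (slice E I (I \ C)) = 0 := by
  classical
  rw [coeff_slice, Nat.cast_eq_zero, Finset.card_eq_zero, Finset.filter_eq_empty_iff]
  rintro f - ⟨hadm, hfix, hexp⟩
  have hmoved : I.filter (fun i => f i ≠ i) = C := by
    rw [Finset.filter_not, hfix, Finset.sdiff_sdiff_eq_self hCI]
  rw [hmoved] at hexp
  refine hadm.2.2.sum_single_ne hCI hC (fun c hc => ?_) hexp
  rw [← hmoved] at hc
  exact (Finset.mem_filter.mp hc).2

theorem sum_single_mem_support_slice (hE : ∀ i, ¬ E i i) {I B : Finset (Fin n)}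
    {g : Fin n → Fin n} (hBI : B ⊆ I) (hedge : ∀ b ∈ B, E b (g b))
    (hesc : ∀ b ∈ B, ∃ r, g^[r] b ∉ B) :
    ∑ b ∈ B, Finsupp.single (g b) 1 ∈ (slice E I (I \ B)).support := by
  classical
  have hmove : ∀ i, B.piecewise g id i = i ↔ i ∉ B := fun i => by
    by_cases hiB : i ∈ B
    · simp only [hiB, Finset.piecewise_eq_of_mem, not_true_eq_false, iff_false]
      exact fun h => hE i (by simpa [h] using hedge i hiB)
    · simp [hiB]
  have hfix : I.filter (fun i => B.piecewise g id i = i) = I \ B := by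
    ext i
    by_cases hi : i ∈ I <;> simp [hi, hmove]
  have hmoved : I.filter (fun i => B.piecewise g id i ≠ i) = B := by
    rw [Finset.filter_not, hfix, Finset.sdiff_sdiff_eq_self hBI]
  rw [mem_support_iff, coeff_slice, Nat.cast_ne_zero, ← Nat.pos_iff_ne_zero, Finset.card_pos]
  refine ⟨B.piecewise g id, Finset.mem_filter.mpr ⟨Finset.mem_univ _,
    isAdmissible_piecewise E hBI hedge hesc, hfix, ?_⟩⟩
  rw [hmoved]
  exact Finset.sum_congr rfl fun b hb => by rw [B.piecewise_eq_of_mem _ _ hb]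

end Numerator

section Main

open MvPolynomial

variable {n : ℕ} {E : Fin n → Fin n → Prop}

theorem slice_sdiff_ne_mul (hE : ∀ i, ¬ E i i) {I S : Finset (Fin n)}
    (hI : StronglyConnected E I) (hSI : S ⊆ I) (hS : S.Nonempty) (hT : (I \ S).Nonempty) :
    ∃ W : Finset (Fin n), slice E I (I \ W) ≠
      slice E I (I \ W.filter (· ∈ S)) * slice E I (I \ W.filter (· ∉ S)) := by
  obtain ⟨g, V, hVI, hV, hbij, hedge, hleave, henter⟩ :=
    exists_bijOn_visiting_both E hI hSI hS hT
  refine ⟨V, fun h => ?_⟩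
  have hsplit : ∑ v ∈ V.filter (· ∈ S), Finsupp.single (g v) 1 +
      ∑ v ∈ V.filter (· ∉ S), Finsupp.single (g v) 1 = indicatorExp V := by
    rw [Finset.sum_filter_add_sum_filter_not, indicatorExp]
    exact Finset.sum_nbij g hbij.mapsTo hbij.injOn hbij.surjOn fun _ _ => rfl
  have hS' := sum_single_mem_support_slice E hE (B := V.filter (· ∈ S))
    ((V.filter_subset _).trans hVI) (fun v hv => hedge v (Finset.mem_filter.mp hv).1)
    fun v hv => (hleave v (Finset.mem_filter.mp hv).1).imp fun _ hr h =>
      hr (Finset.mem_filter.mp h).2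
  have hT' := sum_single_mem_support_slice E hE (B := V.filter (· ∉ S))
    ((V.filter_subset _).trans hVI) (fun v hv => hedge v (Finset.mem_filter.mp hv).1)
    fun v hv => (henter v (Finset.mem_filter.mp hv).1).imp fun _ hr h =>
      (Finset.mem_filter.mp h).2 hr
  have hmem :=
    add_mem_support_mul_of_nonneg (coeff_slice_nonneg E I _) (coeff_slice_nonneg E I _) hS' hT'
  rw [hsplit, ← h, mem_support_iff] at hmem
  exact hmem (coeff_slice_sdiff_eq_zero E hVI hV)

theorem irreducible_Ynum (hE : ∀ i, ¬ E i i) {I : Finset (Fin n)} (hI : StronglyConnected E I) :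
    Irreducible (Ynum E I) := by
  rw [← MulEquiv.irreducible_iff (sumRingEquiv ℤ (Fin n) (Fin n))]
  exact irreducible_of_forall_exists_coeff_ne hI.1 (le_indicatorExp_of_mem_support E I)
    (slice_self E I) fun S hSI hS hT => slice_sdiff_ne_mul hE hI hSI hS hT

theorem subset_of_Ynum_dvd_Ynum {I J : Finset (Fin n)} (h : Ynum E I ∣ Ynum E J) : I ⊆ J := by
  have hne : sumRingEquiv ℤ (Fin n) (Fin n) (Ynum E J) ≠ 0 := fun h0 => by
    simpa [slice, h0] using slice_self E J
  calc I ⊆ (sumRingEquiv ℤ (Fin n) (Fin n) (Ynum E I)).vars :=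
        subset_vars_of_coeff_indicatorExp_ne_zero
          (show slice E I I ≠ 0 by rw [slice_self]; exact one_ne_zero)
    _ ⊆ (sumRingEquiv ℤ (Fin n) (Fin n) (Ynum E J)).vars := vars_subset_of_dvd (map_dvd _ h) hne
    _ ⊆ J := vars_subset_of_le_indicatorExp (le_indicatorExp_of_mem_support E J)

end Main

/-- For `I` strongly connected the numerator `N_I` of `Y_I` is irreducible in
`ℤ[A_1,…,A_n,X_1,…,X_n]`, and numerators of distinct strongly connected subsets have no
common non-unit factor. -/
theorem stmt7 (n : ℕ) (E : Fin n → Fin n → Prop) (hE : ∀ i, ¬ E i i) :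
    (∀ I : Finset (Fin n), StronglyConnected E I → Irreducible (Ynum E I)) ∧
    (∀ I J : Finset (Fin n), StronglyConnected E I → StronglyConnected E J → I ≠ J →
      ∀ d : MvPolynomial (Fin n ⊕ Fin n) ℤ, d ∣ Ynum E I → d ∣ Ynum E J → IsUnit d) := by
  refine ⟨fun I hI => irreducible_Ynum hE hI, fun I J hI hJ hIJ d hdI hdJ => ?_⟩
  by_contra hd
  have hdI' := ((irreducible_Ynum hE hI).dvd_iff.mp hdI).resolve_left hd
  have hdJ' := ((irreducible_Ynum hE hJ).dvd_iff.mp hdJ).resolve_left hd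
  exact hIJ ((subset_of_Ynum_dvd_Ynum (hdI'.dvd.trans hdJ'.symm.dvd)).antisymm
    (subset_of_Ynum_dvd_Ynum (hdJ'.dvd.trans hdI'.symm.dvd)))
end
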